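/- arXiv:1212.5855 — 4 statements merged into one kernel-verified Lean document; each statement's English description precedes it below -/
import Mathlib

section
/- In the two-agent model with the OR (1-out-of-2) fusion rule, the Bayes risk of any sequential strategy (ρ₁, ρ₂), where ρ₂ : {0,1} → ℝ gives the second agent's threshold as a function of the first agent's decision, equals c₁₀·p₀·( a(ρ₁) + (1 − a(ρ₁))·a(ρ₂(0)) ) + c₀₁·p₁·b(ρ₁)·b(ρ₂(0)), which is exactly the Bayes risk of the parallel strategy with thresholds (ρ₁, ρ₂(0)). In particular, the Bayes risk does not depend on ρ₂(1), and the infimum of the Bayes risk over all sequential strategies equals the infimum over all parallel strategies. -/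
/-!
Two-agent team decision making with the OR (1-out-of-2) fusion rule.

Hypothesis `H ∈ {0,1}` has prior `P(H=0) = p0 ∈ (0,1)`.  Given `H = h`, the
private signals `Y₁, Y₂` are i.i.d. with Borel probability law `μh` on `ℝ`.
For a threshold `t`, `typeI μ0 t = μ0((t,∞))` and `typeII μ1 t = μ1((−∞,t])`.
A sequential strategy is a pair `(ρ1, ρ2)` with `ρ2 : Bool → ℝ`; the local
decisions are `Ĥ₁ = 1{Y₁ > ρ1}` and `Ĥ₂ = 1{Y₂ > ρ2 Ĥ₁}`, and the OR-fusion
global decision is `Ĥ₁ ∨ Ĥ₂`.  A parallel strategy uses fixed thresholds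
`(lam1, lam2)` (the second agent ignores the first agent's decision).
-/

open MeasureTheory

noncomputable section

/-- Type I error probability of the threshold test `1{Y > t}` when `Y ∼ μ0`. -/
def typeI (μ0 : Measure ℝ) (t : ℝ) : ℝ := (μ0 (Set.Ioi t)).toReal

/-- Type II error probability of the threshold test `1{Y > t}` when `Y ∼ μ1`. -/
def typeII (μ1 : Measure ℝ) (t : ℝ) : ℝ := (μ1 (Set.Iic t)).toReal

/-- The event (set of signal pairs) on which the OR-fused global decision of the
sequential strategy `(ρ1, ρ2)` is `1`:  `Ĥ₁ ∨ Ĥ₂ = 1`, where `Ĥ₁ = 1{y₁ > ρ1}`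
and `Ĥ₂ = 1{y₂ > ρ2 Ĥ₁}`. -/
def seqGlobalOneOR (ρ1 : ℝ) (ρ2 : Bool → ℝ) : Set (ℝ × ℝ) :=
  {y | ρ1 < y.1 ∨ ρ2 (decide (ρ1 < y.1)) < y.2}

/-- Bayes risk of the sequential strategy `(ρ1, ρ2)` under the OR fusion rule:
`c10·p0·P(Ĥ=1 | H=0) + c01·p1·P(Ĥ=0 | H=1)`, where conditionally on `H = h`
the signals are i.i.d. `μh ⊗ μh`. -/
def seqRiskOR (μ0 μ1 : Measure ℝ) (p0 c10 c01 : ℝ) (ρ1 : ℝ) (ρ2 : Bool → ℝ) : ℝ :=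
  c10 * p0 * ((μ0.prod μ0) (seqGlobalOneOR ρ1 ρ2)).toReal
    + c01 * (1 - p0) * ((μ1.prod μ1) (seqGlobalOneOR ρ1 ρ2)ᶜ).toReal

/-- Bayes risk of the parallel strategy `(lam1, lam2)` under the OR fusion rule. -/
def parRiskOR (μ0 μ1 : Measure ℝ) (p0 c10 c01 : ℝ) (lam1 lam2 : ℝ) : ℝ :=
  seqRiskOR μ0 μ1 p0 c10 c01 lam1 (fun _ => lam2)

/-
Once the first agent decides `1` the OR-fused decision is `1` whatever the second agent
does, so the second agent's threshold only matters after a `0`, i.e. only `ρ2 false`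
enters.  The fused decision is `0` exactly on the rectangle `(-∞, ρ1] × (-∞, ρ2 false]`,
whose product measure factorises; the type I term is its complement under `μ0`.
-/

section

variable (ρ1 : ℝ) {ρ2 ρ2' : Bool → ℝ}

lemma seqGlobalOneOR_congr (h : ρ2 false = ρ2' false) :
    seqGlobalOneOR ρ1 ρ2 = seqGlobalOneOR ρ1 ρ2' := by
  ext ⟨y1, y2⟩
  by_cases hy : ρ1 < y1 <;> simp [seqGlobalOneOR, hy, h]

variable (ρ2)

lemma compl_seqGlobalOneOR :
    (seqGlobalOneOR ρ1 ρ2)ᶜ = Set.Iic ρ1 ×ˢ Set.Iic (ρ2 false) := by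
  ext ⟨y1, y2⟩
  by_cases hy : ρ1 < y1 <;> simp [seqGlobalOneOR, hy, not_lt.mp]

lemma measurableSet_seqGlobalOneOR : MeasurableSet (seqGlobalOneOR ρ1 ρ2) :=
  .of_compl <| compl_seqGlobalOneOR ρ1 ρ2 ▸ measurableSet_Iic.prod measurableSet_Iic

variable (μ : Measure ℝ)

lemma typeII_eq_one_sub_typeI [IsProbabilityMeasure μ] (t : ℝ) :
    typeII μ t = 1 - typeI μ t := by
  rw [typeII, typeI, ← Set.compl_Ioi, ← measureReal_def, ← measureReal_def,
    probReal_compl_eq_one_sub measurableSet_Ioi]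

lemma toReal_prod_compl_seqGlobalOneOR [SFinite μ] :
    ((μ.prod μ) (seqGlobalOneOR ρ1 ρ2)ᶜ).toReal = typeII μ ρ1 * typeII μ (ρ2 false) := by
  rw [compl_seqGlobalOneOR, Measure.prod_prod, ENNReal.toReal_mul, typeII, typeII]

lemma toReal_prod_seqGlobalOneOR [IsProbabilityMeasure μ] :
    ((μ.prod μ) (seqGlobalOneOR ρ1 ρ2)).toReal
      = typeI μ ρ1 + (1 - typeI μ ρ1) * typeI μ (ρ2 false) := by
  have hcompl := probReal_compl_eq_one_sub (μ := μ.prod μ) (measurableSet_seqGlobalOneOR ρ1 ρ2)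
  rw [measureReal_def, measureReal_def, toReal_prod_compl_seqGlobalOneOR,
    typeII_eq_one_sub_typeI, typeII_eq_one_sub_typeI] at hcompl
  linarith

variable (μ1 : Measure ℝ) (p0 c10 c01 : ℝ)

lemma seqRiskOR_eq [IsProbabilityMeasure μ] [SFinite μ1] :
    seqRiskOR μ μ1 p0 c10 c01 ρ1 ρ2
      = c10 * p0 * (typeI μ ρ1 + (1 - typeI μ ρ1) * typeI μ (ρ2 false))
        + c01 * (1 - p0) * (typeII μ1 ρ1 * typeII μ1 (ρ2 false)) := by
  rw [seqRiskOR, toReal_prod_seqGlobalOneOR, toReal_prod_compl_seqGlobalOneOR]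

lemma seqRiskOR_eq_parRiskOR :
    seqRiskOR μ μ1 p0 c10 c01 ρ1 ρ2 = parRiskOR μ μ1 p0 c10 c01 ρ1 (ρ2 false) := by
  rw [parRiskOR, seqRiskOR, seqRiskOR, seqGlobalOneOR_congr ρ1 (ρ2' := fun _ ↦ ρ2 false) rfl]

end

theorem two_agent_or_sequential_equals_parallel_general
    (μ0 μ1 : Measure ℝ) [IsProbabilityMeasure μ0] [IsProbabilityMeasure μ1]
    (p0 c10 c01 : ℝ) :
    (∀ (ρ1 : ℝ) (ρ2 : Bool → ℝ),
      seqRiskOR μ0 μ1 p0 c10 c01 ρ1 ρ2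
          = c10 * p0 * (typeI μ0 ρ1 + (1 - typeI μ0 ρ1) * typeI μ0 (ρ2 false))
            + c01 * (1 - p0) * (typeII μ1 ρ1 * typeII μ1 (ρ2 false))
        ∧ seqRiskOR μ0 μ1 p0 c10 c01 ρ1 ρ2 = parRiskOR μ0 μ1 p0 c10 c01 ρ1 (ρ2 false))
    ∧ (∀ (ρ1 : ℝ) (ρ2 ρ2' : Bool → ℝ), ρ2 false = ρ2' false →
        seqRiskOR μ0 μ1 p0 c10 c01 ρ1 ρ2 = seqRiskOR μ0 μ1 p0 c10 c01 ρ1 ρ2')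
    ∧ sInf {r : ℝ | ∃ (ρ1 : ℝ) (ρ2 : Bool → ℝ), r = seqRiskOR μ0 μ1 p0 c10 c01 ρ1 ρ2}
        = sInf {r : ℝ | ∃ (lam1 lam2 : ℝ), r = parRiskOR μ0 μ1 p0 c10 c01 lam1 lam2} := by
  refine ⟨fun ρ1 ρ2 ↦ ⟨seqRiskOR_eq .., seqRiskOR_eq_parRiskOR ..⟩, fun ρ1 ρ2 ρ2' h ↦ ?_, ?_⟩
  · rw [seqRiskOR_eq_parRiskOR, seqRiskOR_eq_parRiskOR, h]
  · congr 1
    ext r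
    constructor
    · rintro ⟨ρ1, ρ2, rfl⟩
      exact ⟨ρ1, ρ2 false, seqRiskOR_eq_parRiskOR ..⟩
    · rintro ⟨lam1, lam2, rfl⟩
      exact ⟨lam1, fun _ ↦ lam2, rfl⟩

/-- In the two-agent model with the OR (1-out-of-2) fusion rule, the Bayes risk of
any sequential strategy `(ρ1, ρ2)` equals
`c10·p0·(a(ρ1) + (1 − a(ρ1))·a(ρ2 0)) + c01·p1·b(ρ1)·b(ρ2 0)`,
which is exactly the Bayes risk of the parallel strategy `(ρ1, ρ2 0)`.
In particular the Bayes risk does not depend on `ρ2 1`, and the infimum of the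
Bayes risk over all sequential strategies equals the infimum over all parallel
strategies. -/
theorem two_agent_or_sequential_equals_parallel
    (μ0 μ1 : Measure ℝ) [IsProbabilityMeasure μ0] [IsProbabilityMeasure μ1]
    (p0 c10 c01 : ℝ) (hp0 : p0 ∈ Set.Ioo (0 : ℝ) 1) (hc10 : 0 < c10) (hc01 : 0 < c01) :
    (∀ (ρ1 : ℝ) (ρ2 : Bool → ℝ),
      seqRiskOR μ0 μ1 p0 c10 c01 ρ1 ρ2
          = c10 * p0 * (typeI μ0 ρ1 + (1 - typeI μ0 ρ1) * typeI μ0 (ρ2 false))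
            + c01 * (1 - p0) * (typeII μ1 ρ1 * typeII μ1 (ρ2 false))
        ∧ seqRiskOR μ0 μ1 p0 c10 c01 ρ1 ρ2 = parRiskOR μ0 μ1 p0 c10 c01 ρ1 (ρ2 false))
    ∧ (∀ (ρ1 : ℝ) (ρ2 ρ2' : Bool → ℝ), ρ2 false = ρ2' false →
        seqRiskOR μ0 μ1 p0 c10 c01 ρ1 ρ2 = seqRiskOR μ0 μ1 p0 c10 c01 ρ1 ρ2')
    ∧ sInf {r : ℝ | ∃ (ρ1 : ℝ) (ρ2 : Bool → ℝ), r = seqRiskOR μ0 μ1 p0 c10 c01 ρ1 ρ2}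
        = sInf {r : ℝ | ∃ (lam1 lam2 : ℝ), r = parRiskOR μ0 μ1 p0 c10 c01 lam1 lam2} :=
  two_agent_or_sequential_equals_parallel_general μ0 μ1 p0 c10 c01

end
end

section
/- In the two-agent model with the AND (2-out-of-2) fusion rule, the Bayes risk of any sequential strategy (ρ₁, ρ₂), where ρ₂ : {0,1} → ℝ gives the second agent's threshold as a function of the first agent's decision, equals c₁₀·p₀·a(ρ₁)·a(ρ₂(1)) + c₀₁·p₁·( 1 − (1 − b(ρ₁))·(1 − b(ρ₂(1))) ), which is exactly the Bayes risk of the parallel strategy with thresholds (ρ₁, ρ₂(1)). In particular, the Bayes risk does not depend on ρ₂(0), and the infimum of the Bayes risk over all sequential strategies equals the infimum over all parallel strategies. -/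
/-!
Two-agent team decision making with the AND (2-out-of-2) fusion rule.

Hypothesis `H ∈ {0,1}` has prior `P(H=0) = p0 ∈ (0,1)`.  Given `H = h`, the
private signals `Y₁, Y₂` are i.i.d. with Borel probability law `μh` on `ℝ`.
For a threshold `t`, `typeI μ0 t = μ0((t,∞))` and `typeII μ1 t = μ1((−∞,t])`.
A sequential strategy is a pair `(ρ1, ρ2)` with `ρ2 : Bool → ℝ`; the local
decisions are `Ĥ₁ = 1{Y₁ > ρ1}` and `Ĥ₂ = 1{Y₂ > ρ2 Ĥ₁}`, and the AND-fusion
global decision is `Ĥ₁ ∧ Ĥ₂`.  A parallel strategy uses fixed thresholds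
`(lam1, lam2)`.
-/

open MeasureTheory

noncomputable section

/-- The event (set of signal pairs) on which the AND-fused global decision of the
sequential strategy `(ρ1, ρ2)` is `1`:  `Ĥ₁ ∧ Ĥ₂ = 1`, where `Ĥ₁ = 1{y₁ > ρ1}`
and `Ĥ₂ = 1{y₂ > ρ2 Ĥ₁}`. -/
def seqGlobalOneAND (ρ1 : ℝ) (ρ2 : Bool → ℝ) : Set (ℝ × ℝ) :=
  {y | ρ1 < y.1 ∧ ρ2 (decide (ρ1 < y.1)) < y.2}

/-- Bayes risk of the sequential strategy `(ρ1, ρ2)` under the AND fusion rule: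
`c10·p0·P(Ĥ=1 | H=0) + c01·p1·P(Ĥ=0 | H=1)`, where conditionally on `H = h`
the signals are i.i.d. `μh ⊗ μh`. -/
def seqRiskAND (μ0 μ1 : Measure ℝ) (p0 c10 c01 : ℝ) (ρ1 : ℝ) (ρ2 : Bool → ℝ) : ℝ :=
  c10 * p0 * ((μ0.prod μ0) (seqGlobalOneAND ρ1 ρ2)).toReal
    + c01 * (1 - p0) * ((μ1.prod μ1) (seqGlobalOneAND ρ1 ρ2)ᶜ).toReal

/-- Bayes risk of the parallel strategy `(lam1, lam2)` under the AND fusion rule. -/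
def parRiskAND (μ0 μ1 : Measure ℝ) (p0 c10 c01 : ℝ) (lam1 lam2 : ℝ) : ℝ :=
  seqRiskAND μ0 μ1 p0 c10 c01 lam1 (fun _ => lam2)


lemma seqGlobalOneAND_eq (ρ1 : ℝ) (ρ2 : Bool → ℝ) :
    seqGlobalOneAND ρ1 ρ2 = Set.Ioi ρ1 ×ˢ Set.Ioi (ρ2 true) := by
  ext ⟨y1, y2⟩
  simp only [seqGlobalOneAND, Set.mem_setOf_eq, Set.mem_prod, Set.mem_Ioi]
  constructor
  · rintro ⟨h1, h2⟩
    refine ⟨h1, ?_⟩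
    simpa [h1] using h2
  · rintro ⟨h1, h2⟩
    exact ⟨h1, by simpa [h1] using h2⟩

lemma ioi_toReal (μ1 : Measure ℝ) [IsProbabilityMeasure μ1] (t : ℝ) :
    (μ1 (Set.Ioi t)).toReal = 1 - typeII μ1 t := by
  have h : Set.Ioi t = (Set.Iic t)ᶜ := by ext x; simp
  rw [h, prob_compl_eq_one_sub measurableSet_Iic,
    ENNReal.toReal_sub_of_le prob_le_one (by simp), ENNReal.toReal_one]
  rfl

lemma seqRiskAND_eq (μ0 μ1 : Measure ℝ) [IsProbabilityMeasure μ0] [IsProbabilityMeasure μ1]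
    (p0 c10 c01 : ℝ) (ρ1 : ℝ) (ρ2 : Bool → ℝ) :
    seqRiskAND μ0 μ1 p0 c10 c01 ρ1 ρ2
      = c10 * p0 * (typeI μ0 ρ1 * typeI μ0 (ρ2 true))
        + c01 * (1 - p0) * (1 - (1 - typeII μ1 ρ1) * (1 - typeII μ1 (ρ2 true))) := by
  have hmeas : MeasurableSet (Set.Ioi ρ1 ×ˢ Set.Ioi (ρ2 true)) :=
    measurableSet_Ioi.prod measurableSet_Ioi
  rw [seqRiskAND, seqGlobalOneAND_eq, prob_compl_eq_one_sub hmeas,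
    Measure.prod_prod, Measure.prod_prod]
  have h0 : ((μ0 (Set.Ioi ρ1)) * (μ0 (Set.Ioi (ρ2 true)))).toReal
      = typeI μ0 ρ1 * typeI μ0 (ρ2 true) := by
    rw [ENNReal.toReal_mul]; rfl
  have hle : μ1 (Set.Ioi ρ1) * μ1 (Set.Ioi (ρ2 true)) ≤ 1 :=
    le_trans (mul_le_mul' prob_le_one prob_le_one) (by simp)
  have h1 : ((1 : ENNReal) - μ1 (Set.Ioi ρ1) * μ1 (Set.Ioi (ρ2 true))).toReal
      = 1 - (1 - typeII μ1 ρ1) * (1 - typeII μ1 (ρ2 true)) := by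
    rw [ENNReal.toReal_sub_of_le hle (by simp), ENNReal.toReal_mul,
      ioi_toReal, ioi_toReal]
    simp
  rw [h0, h1]

/-- In the two-agent model with the AND (2-out-of-2) fusion rule, the Bayes risk of
any sequential strategy `(ρ1, ρ2)` equals
`c10·p0·a(ρ1)·a(ρ2 1) + c01·p1·(1 − (1 − b(ρ1))·(1 − b(ρ2 1)))`,
which is exactly the Bayes risk of the parallel strategy `(ρ1, ρ2 1)`.
In particular the Bayes risk does not depend on `ρ2 0`, and the infimum of the
Bayes risk over all sequential strategies equals the infimum over all parallel
strategies. -/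
theorem two_agent_and_sequential_equals_parallel
    (μ0 μ1 : Measure ℝ) [IsProbabilityMeasure μ0] [IsProbabilityMeasure μ1]
    (p0 c10 c01 : ℝ) (hp0 : p0 ∈ Set.Ioo (0 : ℝ) 1) (hc10 : 0 < c10) (hc01 : 0 < c01) :
    (∀ (ρ1 : ℝ) (ρ2 : Bool → ℝ),
      seqRiskAND μ0 μ1 p0 c10 c01 ρ1 ρ2
          = c10 * p0 * (typeI μ0 ρ1 * typeI μ0 (ρ2 true))
            + c01 * (1 - p0) * (1 - (1 - typeII μ1 ρ1) * (1 - typeII μ1 (ρ2 true)))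
        ∧ seqRiskAND μ0 μ1 p0 c10 c01 ρ1 ρ2 = parRiskAND μ0 μ1 p0 c10 c01 ρ1 (ρ2 true))
    ∧ (∀ (ρ1 : ℝ) (ρ2 ρ2' : Bool → ℝ), ρ2 true = ρ2' true →
        seqRiskAND μ0 μ1 p0 c10 c01 ρ1 ρ2 = seqRiskAND μ0 μ1 p0 c10 c01 ρ1 ρ2')
    ∧ sInf {r : ℝ | ∃ (ρ1 : ℝ) (ρ2 : Bool → ℝ), r = seqRiskAND μ0 μ1 p0 c10 c01 ρ1 ρ2}
        = sInf {r : ℝ | ∃ (lam1 lam2 : ℝ), r = parRiskAND μ0 μ1 p0 c10 c01 lam1 lam2} := by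
  have key : ∀ (ρ1 : ℝ) (ρ2 : Bool → ℝ),
      seqRiskAND μ0 μ1 p0 c10 c01 ρ1 ρ2
        = c10 * p0 * (typeI μ0 ρ1 * typeI μ0 (ρ2 true))
          + c01 * (1 - p0) * (1 - (1 - typeII μ1 ρ1) * (1 - typeII μ1 (ρ2 true))) :=
    fun ρ1 ρ2 => seqRiskAND_eq μ0 μ1 p0 c10 c01 ρ1 ρ2
  refine ⟨fun ρ1 ρ2 => ⟨key ρ1 ρ2, ?_⟩, fun ρ1 ρ2 ρ2' h => ?_, ?_⟩
  · rw [key ρ1 ρ2, parRiskAND, key ρ1 (fun _ => ρ2 true)]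
  · rw [key ρ1 ρ2, key ρ1 ρ2', h]
  · congr 1
    ext r
    constructor
    · rintro ⟨ρ1, ρ2, rfl⟩
      exact ⟨ρ1, ρ2 true, by rw [parRiskAND, key ρ1 ρ2, key ρ1 (fun _ => ρ2 true)]⟩
    · rintro ⟨l1, l2, rfl⟩
      exact ⟨l1, fun _ => l2, rfl⟩


end
end

section
/- (Theorem 1.) In the two-agent model, for each L ∈ {1, 2} (i.e., for any L-out-of-2 fusion rule), the infimum of the Bayes risk over all sequential strategies equals the infimum of the Bayes risk over all parallel strategies; that is, allowing the second agent to observe the first agent's decision cannot strictly decrease the achievable Bayes risk. -/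
/-!
Theorem 1 of "Keep Ballots Secret": two-agent team decision making by voting.

Hypothesis `H ∈ {0,1}` has prior `P(H=0) = p0 ∈ (0,1)`.  Given `H = h`, the
private signals `Y₁, Y₂` are i.i.d. with Borel probability law `μh` on `ℝ`.
A sequential strategy is a pair `(ρ1, ρ2)` with `ρ2 : Bool → ℝ`; the local
decisions are `Ĥ₁ = 1{Y₁ > ρ1}` and `Ĥ₂ = 1{Y₂ > ρ2 Ĥ₁}`.  Under the
`L`-out-of-`2` fusion rule the global decision is `1{Ĥ₁ + Ĥ₂ ≥ L}`, and the
Bayes risk is `c10·p0·P(Ĥ=1 | H=0) + c01·p1·P(Ĥ=0 | H=1)`.  A parallel strategy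
uses fixed thresholds `(lam1, lam2)`.
-/

open MeasureTheory

noncomputable section

/-- Number of `1` votes of the two agents under the sequential strategy `(ρ1, ρ2)`
at the signal realization `y`:  `Ĥ₁ + Ĥ₂` with `Ĥ₁ = 1{y₁ > ρ1}`,
`Ĥ₂ = 1{y₂ > ρ2 Ĥ₁}`. -/
def voteCount (ρ1 : ℝ) (ρ2 : Bool → ℝ) (y : ℝ × ℝ) : ℕ :=
  (if ρ1 < y.1 then 1 else 0) + (if ρ2 (decide (ρ1 < y.1)) < y.2 then 1 else 0)

/-- The event (set of signal pairs) on which the `L`-out-of-`2` fused global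
decision of the sequential strategy `(ρ1, ρ2)` is `1`. -/
def seqGlobalOne (L : ℕ) (ρ1 : ℝ) (ρ2 : Bool → ℝ) : Set (ℝ × ℝ) :=
  {y | L ≤ voteCount ρ1 ρ2 y}

/-- Bayes risk of the sequential strategy `(ρ1, ρ2)` under the `L`-out-of-`2`
fusion rule, when the signals are i.i.d. `μh ⊗ μh` conditionally on `H = h`. -/
def seqRisk (μ0 μ1 : Measure ℝ) (p0 c10 c01 : ℝ) (L : ℕ) (ρ1 : ℝ) (ρ2 : Bool → ℝ) : ℝ :=
  c10 * p0 * ((μ0.prod μ0) (seqGlobalOne L ρ1 ρ2)).toReal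
    + c01 * (1 - p0) * ((μ1.prod μ1) (seqGlobalOne L ρ1 ρ2)ᶜ).toReal

/-- Bayes risk of the parallel strategy `(lam1, lam2)` under the `L`-out-of-`2`
fusion rule. -/
def parRisk (μ0 μ1 : Measure ℝ) (p0 c10 c01 : ℝ) (L : ℕ) (lam1 lam2 : ℝ) : ℝ :=
  seqRisk μ0 μ1 p0 c10 c01 L lam1 (fun _ => lam2)

/-- **Theorem 1.**  In the two-agent model, for each `L ∈ {1, 2}` (i.e. for any
`L`-out-of-`2` fusion rule), the infimum of the Bayes risk over all sequential
strategies equals the infimum of the Bayes risk over all parallel strategies: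
allowing the second agent to observe the first agent's decision cannot strictly
decrease the achievable Bayes risk. -/
theorem two_agent_social_learning_futile
    (μ0 μ1 : Measure ℝ) [IsProbabilityMeasure μ0] [IsProbabilityMeasure μ1]
    (p0 c10 c01 : ℝ) (hp0 : p0 ∈ Set.Ioo (0 : ℝ) 1) (hc10 : 0 < c10) (hc01 : 0 < c01) :
    ∀ L ∈ ({1, 2} : Set ℕ),
      sInf {r : ℝ | ∃ (ρ1 : ℝ) (ρ2 : Bool → ℝ), r = seqRisk μ0 μ1 p0 c10 c01 L ρ1 ρ2}
        = sInf {r : ℝ | ∃ (lam1 lam2 : ℝ), r = parRisk μ0 μ1 p0 c10 c01 L lam1 lam2} := by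
  have set1 : ∀ (ρ1 : ℝ) (ρ2 : Bool → ℝ),
      seqGlobalOne 1 ρ1 ρ2 = seqGlobalOne 1 ρ1 (fun _ => ρ2 false) := by
    intro ρ1 ρ2
    ext y
    simp only [seqGlobalOne, voteCount, Set.mem_setOf_eq]
    by_cases h : ρ1 < y.1 <;> simp [h]
  have set2 : ∀ (ρ1 : ℝ) (ρ2 : Bool → ℝ),
      seqGlobalOne 2 ρ1 ρ2 = seqGlobalOne 2 ρ1 (fun _ => ρ2 true) := by
    intro ρ1 ρ2
    ext y
    simp only [seqGlobalOne, voteCount, Set.mem_setOf_eq]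
    by_cases h : ρ1 < y.1 <;> by_cases h2 : ρ2 true < y.2 <;>
      by_cases h3 : ρ2 false < y.2 <;> simp [h, h2, h3]
  rintro L hL
  congr 1
  ext r
  constructor
  · rintro ⟨ρ1, ρ2, rfl⟩
    rcases hL with rfl | rfl
    · refine ⟨ρ1, ρ2 false, ?_⟩
      simp only [parRisk, seqRisk, set1 ρ1 ρ2]
    · refine ⟨ρ1, ρ2 true, ?_⟩
      simp only [parRisk, seqRisk, set2 ρ1 ρ2]
  · rintro ⟨l1, l2, rfl⟩
    exact ⟨l1, fun _ => l2, rfl⟩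

end
end

section
/- (Stationary-threshold propagation: core of Theorem 2.) Suppose μ₀ and μ₁ have densities f₀ and f₁, let 2 ≤ L ≤ N, let λ* ∈ ℝ, write a = a(λ*) ∈ (0,1) and b = b(λ*) ∈ (0,1), and suppose λ* satisfies the (N+1)-agent stationarity condition c₀₁·p₁·f₁(λ*)·b^{N−L+1}(1−b)^{L−1} = c₁₀·p₀·f₀(λ*)·a^{L−1}(1−a)^{N−L+1}. Define the updated beliefs q⁰ = p₀(1−a)/(p₀(1−a)+p₁ b) and q¹ = p₀ a/(p₀ a + p₁(1−b)). Then λ* also satisfies the N-agent stationarity condition with prior q⁰ and the L-out-of-N rule, namely c₀₁·(1−q⁰)·f₁(λ*)·b^{N−L}(1−b)^{L−1} = c₁₀·q⁰·f₀(λ*)·a^{L−1}(1−a)^{N−L}, and the N-agent stationarity condition with prior q¹ and the (L−1)-out-of-N rule, namely c₀₁·(1−q¹)·f₁(λ*)·b^{N−L+1}(1−b)^{L−2} = c₁₀·q¹·f₀(λ*)·a^{L−2}(1−a)^{N−L+1}. Hence the optimal common threshold is unchanged after the first agent's vote is observed: the positive feedback from the belief update exactly cancels the negative feedback from the fusion-rule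 update. -/
open MeasureTheory

/-!
Stationary-threshold propagation (core of Theorem 2).

`p0 ∈ (0,1)`, `p1 = 1 − p0` are the prior probabilities of `H = 0`, `H = 1`;
the conditional signal laws `μ0, μ1` have densities `f0, f1` on `ℝ`;
`a = μ0((lam*, ∞))` and `b = μ1((−∞, lam*])` are the Type I and Type II error
probabilities of the threshold test `1{Y > lam*}`.  The stationarity condition
for an `n`-agent team with prior `q` and `K`-out-of-`n` fusion rule, all agents
using the common threshold `lam`, is
`c01·(1−q)·f1(lam)·b^{n−K}(1−b)^{K−1} = c10·q·f0(lam)·a^{K−1}(1−a)^{n−K}`,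
characterizing critical points of the team Bayes risk.

If `lam*` is stationary for the `(N+1)`-agent problem with prior `p0` and the
`L`-out-of-`(N+1)` rule, then it is also stationary for the `N`-agent problem
with updated belief `q0` and the `L`-out-of-`N` rule, and for the `N`-agent
problem with updated belief `q1` and the `(L−1)`-out-of-`N` rule: the positive
feedback from the belief update exactly cancels the negative feedback from the
fusion-rule update, so the optimal common threshold is unchanged after the
first agent's vote is observed. -/
theorem stationary_threshold_propagation
    (p0 p1 c10 c01 : ℝ) (hp0 : p0 ∈ Set.Ioo (0 : ℝ) 1) (hp1 : p1 = 1 - p0)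
    (hc10 : 0 < c10) (hc01 : 0 < c01)
    (f0 f1 : ℝ → ℝ)
    (μ0 μ1 : Measure ℝ) [IsProbabilityMeasure μ0] [IsProbabilityMeasure μ1]
    (hd0 : μ0 = volume.withDensity fun t => ENNReal.ofReal (f0 t))
    (hd1 : μ1 = volume.withDensity fun t => ENNReal.ofReal (f1 t))
    (N L : ℕ) (hL2 : 2 ≤ L) (hLN : L ≤ N)
    (lams : ℝ) (a b : ℝ)
    (hadef : a = (μ0 (Set.Ioi lams)).toReal) (hbdef : b = (μ1 (Set.Iic lams)).toReal)
    (haI : a ∈ Set.Ioo (0 : ℝ) 1) (hbI : b ∈ Set.Ioo (0 : ℝ) 1)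
    (q0 q1 : ℝ)
    (hq0 : q0 = p0 * (1 - a) / (p0 * (1 - a) + p1 * b))
    (hq1 : q1 = p0 * a / (p0 * a + p1 * (1 - b)))
    (hstat : c01 * p1 * f1 lams * b ^ (N - L + 1) * (1 - b) ^ (L - 1)
      = c10 * p0 * f0 lams * a ^ (L - 1) * (1 - a) ^ (N - L + 1)) :
    c01 * (1 - q0) * f1 lams * b ^ (N - L) * (1 - b) ^ (L - 1)
        = c10 * q0 * f0 lams * a ^ (L - 1) * (1 - a) ^ (N - L)
    ∧ c01 * (1 - q1) * f1 lams * b ^ (N - L + 1) * (1 - b) ^ (L - 2)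
        = c10 * q1 * f0 lams * a ^ (L - 2) * (1 - a) ^ (N - L + 1) := by
  obtain ⟨hp0l, hp0u⟩ := hp0
  obtain ⟨ha0, ha1⟩ := haI
  obtain ⟨hb0, hb1⟩ := hbI
  have hp1pos : 0 < p1 := by rw [hp1]; linarith
  obtain ⟨m, rfl⟩ : ∃ m, L = m + 2 := ⟨L - 2, by omega⟩
  obtain ⟨n, rfl⟩ : ∃ n, N = n + (m + 2) := ⟨N - (m + 2), by omega⟩
  simp only [show n + (m + 2) - (m + 2) = n from by omega,
    show m + 2 - 1 = m + 1 from by omega, show m + 2 - 2 = m from by omega] at hstat ⊢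
  have hD0 : p0 * (1 - a) + p1 * b ≠ 0 := by
    have : 0 < p0 * (1 - a) + p1 * b :=
      add_pos (mul_pos hp0l (by linarith)) (mul_pos hp1pos hb0)
    linarith
  have hD1 : p0 * a + p1 * (1 - b) ≠ 0 := by
    have : 0 < p0 * a + p1 * (1 - b) :=
      add_pos (mul_pos hp0l ha0) (mul_pos hp1pos (by linarith))
    linarith
  constructor
  · rw [hq0]
    field_simp
    linear_combination hstat
  · rw [hq1]
    field_simp
    linear_combination hstat
end
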